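/- arXiv:2303.17304 — 6 statements merged into one kernel-verified Lean document; each statement's English description precedes it below -/
import Mathlib

section
/- Suppose u ∈ U, (c, h) ∈ X, d ∈ D, w ∈ ℝᵖ with d + w ∈ D, and (ĉ, ĥ, d̂) ∈ Î. Let the plant evolve by (c⁺, h⁺) = f((c, h), u) and d⁺ = d + w, with measured output y = W_y h + b_y + d, and let (ĉ⁺, ĥ⁺, d̂⁺) be the observer update. Then the estimation errors e_c = c − ĉ, e_h = h − ĥ, e_d = d − d̂ satisfy, componentwise, (‖c⁺ − ĉ⁺‖, ‖h⁺ − ĥ⁺‖, ‖d⁺ − d̂⁺‖)ᵀ ≤ A_d · (‖e_c‖, ‖e_h‖, ‖e_d‖)ᵀ + (0, 0, 1)ᵀ · ‖w‖. -/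
open Matrix Filter Set
open scoped ENNReal NNReal BigOperators

noncomputable section

namespace LSTMmpc

/-- The logistic sigmoid `σ(z) = 1/(1+e^{-z})`. -/
def sigmoid (z : ℝ) : ℝ := 1 / (1 + Real.exp (-z))

/-- Euclidean norm of a finite real vector. -/
def enorm {k : ℕ} (v : Fin k → ℝ) : ℝ := Real.sqrt (∑ i, v i ^ 2)

/-- Sup (∞) norm of a finite real vector. -/
def vinf {k : ℕ} (v : Fin k → ℝ) : ℝ := ⨆ i, |v i|

/-- Spectral (ℓ²-induced) norm of a real matrix. -/
def spec {a b : ℕ} (M : Matrix (Fin a) (Fin b) ℝ) : ℝ :=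
  ⨆ v : {v : Fin b → ℝ // enorm v ≤ 1}, enorm (M.mulVec v.1)

/-- Induced ∞-norm (maximum absolute row sum) of the horizontal block `[s•A, B, v]`. -/
def rowNorm3 {n m : ℕ} (s : ℝ) (A : Matrix (Fin n) (Fin m) ℝ)
    (B : Matrix (Fin n) (Fin n) ℝ) (v : Fin n → ℝ) : ℝ :=
  ⨆ i, (∑ j, |s * A i j| + ∑ j, |B i j| + |v i|)

/-- Induced ∞-norm of the horizontal block `[s•A, B, v, C, t•D]`. -/
def rowNorm5 {n m p : ℕ} (s : ℝ) (A : Matrix (Fin n) (Fin m) ℝ)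
    (B : Matrix (Fin n) (Fin n) ℝ) (v : Fin n → ℝ)
    (C : Matrix (Fin n) (Fin n) ℝ) (t : ℝ) (D : Matrix (Fin n) (Fin p) ℝ) : ℝ :=
  ⨆ i, (∑ j, |s * A i j| + ∑ j, |B i j| + |v i| + ∑ j, |C i j| + ∑ j, |t * D i j|)

/-- Weighted norm `‖v‖_P = √(vᵀ P v)`. -/
def wnorm {k : ℕ} (P : Matrix (Fin k) (Fin k) ℝ) (v : Fin k → ℝ) : ℝ :=
  Real.sqrt (v ⬝ᵥ P.mulVec v)

/-- Minimum eigenvalue of a hermitian real matrix. -/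
def lamMin {k : ℕ} (P : Matrix (Fin k) (Fin k) ℝ) (hP : P.IsHermitian) : ℝ :=
  ⨅ i, hP.eigenvalues i

/-- Maximum eigenvalue of a hermitian real matrix. -/
def lamMax {k : ℕ} (P : Matrix (Fin k) (Fin k) ℝ) (hP : P.IsHermitian) : ℝ :=
  ⨆ i, hP.eigenvalues i

/-- Spectral radius (over `ℂ`) of a real square matrix. -/
def specRad {k : ℕ} (M : Matrix (Fin k) (Fin k) ℝ) : ℝ≥0∞ :=
  spectralRadius ℂ (M.map (fun x : ℝ => (x : ℂ)))

/-- Class `K∞` functions `[0,∞) → [0,∞)`. -/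
def IsClassKInf (γ : ℝ → ℝ) : Prop :=
  ContinuousOn γ (Set.Ici 0) ∧ γ 0 = 0 ∧ StrictMonoOn γ (Set.Ici 0) ∧
    (∀ s, 0 ≤ s → 0 ≤ γ s) ∧ Tendsto γ atTop atTop

/-- Class `KL` functions. -/
def IsClassKL (β : ℝ → ℕ → ℝ) : Prop :=
  (∀ k, ContinuousOn (fun s => β s k) (Set.Ici 0) ∧
      StrictMonoOn (fun s => β s k) (Set.Ici 0) ∧ β 0 k = 0) ∧
  (∀ s, 0 < s → StrictAnti (fun k => β s k) ∧ Tendsto (fun k => β s k) atTop (nhds 0)) ∧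
  (∀ s, 0 ≤ s → ∀ k, 0 ≤ β s k)

/-- Weights of an LSTM network. -/
structure LSTM (n m p : ℕ) where
  Wf : Matrix (Fin n) (Fin m) ℝ
  Wi : Matrix (Fin n) (Fin m) ℝ
  Wc : Matrix (Fin n) (Fin m) ℝ
  Wo : Matrix (Fin n) (Fin m) ℝ
  Uf : Matrix (Fin n) (Fin n) ℝ
  Ui : Matrix (Fin n) (Fin n) ℝ
  Uc : Matrix (Fin n) (Fin n) ℝ
  Uo : Matrix (Fin n) (Fin n) ℝ
  bf : Fin n → ℝ
  bi : Fin n → ℝ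
  bc : Fin n → ℝ
  bo : Fin n → ℝ
  Wy : Matrix (Fin p) (Fin n) ℝ
  bY : Fin p → ℝ

/-- LSTM state `(c, h)`. -/
abbrev State (n : ℕ) := (Fin n → ℝ) × (Fin n → ℝ)

/-- Augmented state `(c, h, d)`. -/
abbrev AugState (n p : ℕ) := (Fin n → ℝ) × (Fin n → ℝ) × (Fin p → ℝ)

variable {n m p : ℕ}

def stepC (S : LSTM n m p) (u : Fin m → ℝ) (c h : Fin n → ℝ) : Fin n → ℝ := fun j =>
  sigmoid ((S.Wf.mulVec u + S.Uf.mulVec h + S.bf) j) * c j +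
    sigmoid ((S.Wi.mulVec u + S.Ui.mulVec h + S.bi) j) *
      Real.tanh ((S.Wc.mulVec u + S.Uc.mulVec h + S.bc) j)

def stepH (S : LSTM n m p) (u : Fin m → ℝ) (c h : Fin n → ℝ) : Fin n → ℝ := fun j =>
  sigmoid ((S.Wo.mulVec u + S.Uo.mulVec h + S.bo) j) * Real.tanh (stepC S u c h j)

/-- One step of the LSTM dynamics `x⁺ = f(x, u)`. -/
def step (S : LSTM n m p) (x : State n) (u : Fin m → ℝ) : State n :=
  (stepC S u x.1 x.2, stepH S u x.1 x.2)

/-- Output map `g(x) = W_y h + b_y`. -/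
def out (S : LSTM n m p) (x : State n) : Fin p → ℝ := S.Wy.mulVec x.2 + S.bY

/-- LSTM trajectory. -/
def traj (S : LSTM n m p) (x0 : State n) (u : ℕ → Fin m → ℝ) : ℕ → State n
  | 0 => x0
  | k + 1 => step S (traj S x0 u k) (u k)

def sFb (S : LSTM n m p) (umax : ℝ) : ℝ := sigmoid (rowNorm3 umax S.Wf S.Uf S.bf)
def sIb (S : LSTM n m p) (umax : ℝ) : ℝ := sigmoid (rowNorm3 umax S.Wi S.Ui S.bi)
def sOb (S : LSTM n m p) (umax : ℝ) : ℝ := sigmoid (rowNorm3 umax S.Wo S.Uo S.bo)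
def sCb (S : LSTM n m p) (umax : ℝ) : ℝ := Real.tanh (rowNorm3 umax S.Wc S.Uc S.bc)
def sXb (S : LSTM n m p) (umax : ℝ) : ℝ :=
  Real.tanh (sIb S umax * sCb S umax / (1 - sFb S umax))
def alphaD (S : LSTM n m p) (umax : ℝ) : ℝ :=
  (1/4) * spec S.Uf * (sIb S umax * sCb S umax / (1 - sFb S umax)) +
    sIb S umax * spec S.Uc + (1/4) * spec S.Ui * sCb S umax
def betaD (S : LSTM n m p) (umax : ℝ) : ℝ :=
  (1/4) * spec S.Wf * (sIb S umax * sCb S umax / (1 - sFb S umax)) +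
    sIb S umax * spec S.Wc + (1/4) * spec S.Wi * sCb S umax
def Adelta (S : LSTM n m p) (umax : ℝ) : Matrix (Fin 2) (Fin 2) ℝ :=
  !![sFb S umax, alphaD S umax;
     sOb S umax * sFb S umax, alphaD S umax * sOb S umax + (1/4) * sXb S umax * spec S.Uo]
def Bdelta (S : LSTM n m p) (umax : ℝ) : Fin 2 → ℝ :=
  ![betaD S umax, betaD S umax * sOb S umax + (1/4) * sXb S umax * spec S.Wo]

def setU (m : ℕ) (umax : ℝ) : Set (Fin m → ℝ) := {u | vinf u ≤ umax}
def setH (n : ℕ) : Set (Fin n → ℝ) := {h | vinf h ≤ 1}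
def setC (S : LSTM n m p) (umax : ℝ) : Set (Fin n → ℝ) :=
  {c | vinf c ≤ sIb S umax * sCb S umax / (1 - sFb S umax)}
def setX (S : LSTM n m p) (umax : ℝ) : Set (State n) := (setC S umax) ×ˢ (setH n)
def setD (p : ℕ) (dmax : ℝ) : Set (Fin p → ℝ) := {d | vinf d ≤ dmax}

/-- Euclidean norm of the full state. -/
def xnorm {n : ℕ} (x : State n) : ℝ := Real.sqrt (∑ i, x.1 i ^ 2 + ∑ i, x.2 i ^ 2)

/-- Euclidean norm of the augmented state. -/
def chinorm {n p : ℕ} (χ : AugState n p) : ℝ :=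
  Real.sqrt (∑ i, χ.1 i ^ 2 + ∑ i, χ.2.1 i ^ 2 + ∑ i, χ.2.2 i ^ 2)

/-- Incremental input-to-state stability of the LSTM in `X` and `U`. -/
def deltaISS (S : LSTM n m p) (umax : ℝ) : Prop :=
  ∃ β γ, IsClassKL β ∧ IsClassKInf γ ∧
    ∀ (k : ℕ) (xa0 xb0 : State n), xa0 ∈ setX S umax → xb0 ∈ setX S umax →
      ∀ ua ub : ℕ → Fin m → ℝ,
        (∀ h < k, ua h ∈ setU m umax) → (∀ h < k, ub h ∈ setU m umax) →
        xnorm (traj S xa0 ua k - traj S xb0 ub k) ≤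
          β (xnorm (xa0 - xb0)) k + γ (⨆ h ∈ Finset.range k, enorm (ua h - ub h))

/-- Observer gains. -/
structure Gains (n p : ℕ) where
  Lf : Matrix (Fin n) (Fin p) ℝ
  Li : Matrix (Fin n) (Fin p) ℝ
  Lo : Matrix (Fin n) (Fin p) ℝ
  Ld : Matrix (Fin p) (Fin p) ℝ

/-- Componentwise saturation to `[-dmax, dmax]`. -/
def sat {p : ℕ} (dmax : ℝ) (v : Fin p → ℝ) : Fin p → ℝ := fun j =>
  min (max (v j) (-dmax)) dmax

/-- Observer output `ŷ = W_y ĥ + b_y + d̂`. -/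
def yhat (S : LSTM n m p) (hh : Fin n → ℝ) (dh : Fin p → ℝ) : Fin p → ℝ :=
  S.Wy.mulVec hh + S.bY + dh

def obsC (S : LSTM n m p) (G : Gains n p) (u : Fin m → ℝ) (y : Fin p → ℝ)
    (ch hh : Fin n → ℝ) (dh : Fin p → ℝ) : Fin n → ℝ := fun j =>
  sigmoid ((S.Wf.mulVec u + S.Uf.mulVec hh + S.bf + G.Lf.mulVec (y - yhat S hh dh)) j) * ch j +
    sigmoid ((S.Wi.mulVec u + S.Ui.mulVec hh + S.bi + G.Li.mulVec (y - yhat S hh dh)) j) *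
      Real.tanh ((S.Wc.mulVec u + S.Uc.mulVec hh + S.bc) j)

def obsH (S : LSTM n m p) (G : Gains n p) (u : Fin m → ℝ) (y : Fin p → ℝ)
    (ch hh : Fin n → ℝ) (dh : Fin p → ℝ) : Fin n → ℝ := fun j =>
  sigmoid ((S.Wo.mulVec u + S.Uo.mulVec hh + S.bo + G.Lo.mulVec (y - yhat S hh dh)) j) *
    Real.tanh (obsC S G u y ch hh dh j)

def obsD (S : LSTM n m p) (G : Gains n p) (dmax : ℝ) (y : Fin p → ℝ)
    (hh : Fin n → ℝ) (dh : Fin p → ℝ) : Fin p → ℝ :=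
  sat dmax (dh + G.Ld.mulVec (y - yhat S hh dh))

/-- One step of the observer. -/
def obsStep (S : LSTM n m p) (G : Gains n p) (dmax : ℝ) (u : Fin m → ℝ) (y : Fin p → ℝ)
    (χ : AugState n p) : AugState n p :=
  (obsC S G u y χ.1 χ.2.1 χ.2.2, obsH S G u y χ.1 χ.2.1 χ.2.2, obsD S G dmax y χ.2.1 χ.2.2)

/-- Observer trajectory. -/
def obsTraj (S : LSTM n m p) (G : Gains n p) (dmax : ℝ) (u : ℕ → Fin m → ℝ)
    (y : ℕ → Fin p → ℝ) (χ0 : AugState n p) : ℕ → AugState n p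
  | 0 => χ0
  | k + 1 => obsStep S G dmax (u k) (y k) (obsTraj S G dmax u y χ0 k)

def sFh (S : LSTM n m p) (G : Gains n p) (umax dmax : ℝ) : ℝ :=
  sigmoid (rowNorm5 umax S.Wf (S.Uf - G.Lf * S.Wy) S.bf (G.Lf * S.Wy) (2 * dmax) G.Lf)
def sIh (S : LSTM n m p) (G : Gains n p) (umax dmax : ℝ) : ℝ :=
  sigmoid (rowNorm5 umax S.Wi (S.Ui - G.Li * S.Wy) S.bi (G.Li * S.Wy) (2 * dmax) G.Li)
def sOh (S : LSTM n m p) (G : Gains n p) (umax dmax : ℝ) : ℝ :=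
  sigmoid (rowNorm5 umax S.Wo (S.Uo - G.Lo * S.Wy) S.bo (G.Lo * S.Wy) (2 * dmax) G.Lo)
def alphaH (S : LSTM n m p) (G : Gains n p) (umax : ℝ) : ℝ :=
  (1/4) * (sIb S umax * sCb S umax / (1 - sFb S umax)) * spec (S.Uf - G.Lf * S.Wy) +
    sIb S umax * spec S.Uc + (1/4) * sCb S umax * spec (S.Ui - G.Li * S.Wy)
def betaH (S : LSTM n m p) (G : Gains n p) (umax : ℝ) : ℝ :=
  (1/4) * (sIb S umax * sCb S umax / (1 - sFb S umax)) * spec G.Lf +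
    (1/4) * sCb S umax * spec G.Li
def gammaH (S : LSTM n m p) (G : Gains n p) (umax dmax : ℝ) : ℝ :=
  sOh S G umax dmax * alphaH S G umax + (1/4) * sXb S umax * spec (S.Uo - G.Lo * S.Wy)
def Ad (S : LSTM n m p) (G : Gains n p) (umax dmax : ℝ) : Matrix (Fin 3) (Fin 3) ℝ :=
  !![sFh S G umax dmax, alphaH S G umax, betaH S G umax;
     sOh S G umax dmax * sFh S G umax dmax, gammaH S G umax dmax,
       sOh S G umax dmax * betaH S G umax + (1/4) * sXb S umax * spec G.Lo;
     0, spec (G.Ld * S.Wy), spec ((1 : Matrix (Fin p) (Fin p) ℝ) - G.Ld)]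

def setChat (S : LSTM n m p) (G : Gains n p) (umax dmax : ℝ) : Set (Fin n → ℝ) :=
  {c | vinf c ≤ sIh S G umax dmax * sCb S umax / (1 - sFh S G umax dmax)}
def setIhat (S : LSTM n m p) (G : Gains n p) (umax dmax : ℝ) : Set (AugState n p) :=
  (setChat S G umax dmax) ×ˢ ((setH n) ×ˢ (setD p dmax))

/-- Incremental Lyapunov function for the LSTM. -/
def Vs {n : ℕ} (Ps : Matrix (Fin 2) (Fin 2) ℝ) (xa xb : State n) : ℝ :=
  wnorm Ps ![enorm (xa.1 - xb.1), enorm (xa.2 - xb.2)]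

/-- Lyapunov function for the observer estimation error. -/
def Vo {n p : ℕ} (Po : Matrix (Fin 3) (Fin 3) ℝ) (χh χ : AugState n p) : ℝ :=
  wnorm Po ![enorm (χh.1 - χ.1), enorm (χh.2.1 - χ.2.1), enorm (χh.2.2 - χ.2.2)]

/-- Disturbance-augmented LSTM update applied to the observer state. -/
def faug (S : LSTM n m p) (χ : AugState n p) (u : Fin m → ℝ) : AugState n p :=
  (stepC S u χ.1 χ.2.1, stepH S u χ.1 χ.2.1, χ.2.2)

def alphaBar (S : LSTM n m p) (G : Gains n p) (umax dmax : ℝ) : ℝ :=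
  (1/4) * (sIh S G umax dmax * sCb S umax / (1 - sFh S G umax dmax)) * spec (G.Lf * S.Wy) +
    (1/4) * sCb S umax * spec (G.Li * S.Wy)
def betaBar (S : LSTM n m p) (G : Gains n p) (umax dmax : ℝ) : ℝ :=
  (1/4) * (sIh S G umax dmax * sCb S umax / (1 - sFh S G umax dmax)) * spec G.Lf +
    (1/4) * sCb S umax * spec G.Li
def gammaBar (S : LSTM n m p) (G : Gains n p) (umax dmax : ℝ) : ℝ :=
  (1/4) * Real.tanh (sIh S G umax dmax * sCb S umax / (1 - sFh S G umax dmax))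
def Lmat (S : LSTM n m p) (G : Gains n p) (umax dmax : ℝ) : Matrix (Fin 3) (Fin 3) ℝ :=
  !![0, alphaBar S G umax dmax, betaBar S G umax dmax;
     0, gammaBar S G umax dmax * spec (G.Lo * S.Wy) + sOb S umax * alphaBar S G umax dmax,
       gammaBar S G umax dmax * spec G.Lo + sOb S umax * betaBar S G umax dmax;
     0, spec (G.Ld * S.Wy), spec G.Ld]


/-!
Every component of the estimation error is a difference of gated products `a ∘ b - a' ∘ b'`,
which we split as `a' ∘ (b - b') + (a - a') ∘ b`. The gate factors are bounded on the invariant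
sets (`|σ z| ≤ σ r` and `|tanh z| ≤ tanh r` whenever `|z| ≤ r`, with `r` a row-sum bound of the
gate argument), and the differences through the Lipschitz constants `1/4` of `σ` and `1` of `tanh`
together with the spectral norms of the matrices acting on `h - ĥ` and `d - d̂`, once the
innovation is written as `y - ŷ = W_y (h - ĥ) + (d - d̂)`. In the disturbance row the saturation
is harmless: it is `1`-Lipschitz and fixes `d + w ∈ D`.
-/

lemma sigmoid_eq_real_sigmoid : sigmoid = Real.sigmoid := funext fun _ => one_div _

lemma sigmoid_pos (z : ℝ) : 0 < sigmoid z := by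
  rw [sigmoid_eq_real_sigmoid]; exact Real.sigmoid_pos z

lemma sigmoid_lt_one (z : ℝ) : sigmoid z < 1 := by
  rw [sigmoid_eq_real_sigmoid]; exact Real.sigmoid_lt_one z

lemma sigmoid_monotone : Monotone sigmoid := by
  rw [sigmoid_eq_real_sigmoid]; exact Real.sigmoid_monotone

/-- `σ' = σ (1 - σ) ≤ 1/4` by AM-GM. -/
lemma abs_sigmoid_sub_le (a b : ℝ) : |sigmoid a - sigmoid b| ≤ 1 / 4 * |a - b| := by
  rw [sigmoid_eq_real_sigmoid]
  refine Convex.norm_image_sub_le_of_norm_hasDerivWithin_le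
    (fun x _ => (Real.hasDerivAt_sigmoid x).hasDerivWithinAt) (fun x _ => ?_) convex_univ
    (Set.mem_univ b) (Set.mem_univ a)
  have h0 := Real.sigmoid_pos x
  have h1 := Real.sigmoid_lt_one x
  rw [Real.norm_eq_abs, abs_of_nonneg (by nlinarith)]
  nlinarith [sq_nonneg (Real.sigmoid x - 1 / 2)]

lemma tanh_eq_two_mul_sigmoid_sub_one (x : ℝ) : Real.tanh x = 2 * sigmoid (2 * x) - 1 := by
  have hexp : Real.exp (-(2 * x)) = Real.exp (-x) * Real.exp (-x) := by
    rw [← Real.exp_add]; ring_nf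
  have hx : Real.exp x = (Real.exp (-x))⁻¹ := by rw [Real.exp_neg, inv_inv]
  have := Real.exp_pos (-x)
  rw [Real.tanh_eq, sigmoid, hexp, hx]
  field_simp
  ring

lemma tanh_monotone : Monotone Real.tanh := fun a b hab => by
  rw [tanh_eq_two_mul_sigmoid_sub_one, tanh_eq_two_mul_sigmoid_sub_one]
  linarith [sigmoid_monotone (by linarith : 2 * a ≤ 2 * b)]

lemma abs_tanh_sub_le (a b : ℝ) : |Real.tanh a - Real.tanh b| ≤ |a - b| := by
  rw [tanh_eq_two_mul_sigmoid_sub_one, tanh_eq_two_mul_sigmoid_sub_one]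
  have h := abs_sigmoid_sub_le (2 * a) (2 * b)
  rw [← mul_sub, abs_mul, abs_two] at h
  rw [show 2 * sigmoid (2 * a) - 1 - (2 * sigmoid (2 * b) - 1)
      = 2 * (sigmoid (2 * a) - sigmoid (2 * b)) by ring, abs_mul, abs_two]
  linarith

lemma tanh_nonneg {x : ℝ} (hx : 0 ≤ x) : 0 ≤ Real.tanh x := by
  simpa using tanh_monotone hx

lemma abs_sigmoid_le_of_abs_le {z M : ℝ} (h : |z| ≤ M) : |sigmoid z| ≤ sigmoid M := by
  rw [abs_of_pos (sigmoid_pos z)]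
  exact sigmoid_monotone ((le_abs_self z).trans h)

lemma abs_tanh_le_of_abs_le {z M : ℝ} (h : |z| ≤ M) : |Real.tanh z| ≤ Real.tanh M := by
  rw [abs_le] at h ⊢
  have := tanh_monotone h.1
  rw [Real.tanh_neg] at this
  exact ⟨by linarith, tanh_monotone h.2⟩

section EuclideanNorm

variable {k a b : ℕ}

lemma enorm_eq_norm_toLp (v : Fin k → ℝ) : enorm v = ‖WithLp.toLp 2 v‖ := by
  simp [enorm, EuclideanSpace.norm_eq]

lemma enorm_nonneg (v : Fin k → ℝ) : 0 ≤ enorm v := Real.sqrt_nonneg _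

lemma enorm_add_le (v w : Fin k → ℝ) : enorm (v + w) ≤ enorm v + enorm w := by
  simpa only [enorm_eq_norm_toLp, WithLp.toLp_add] using norm_add_le _ _

lemma enorm_sub_le (v w : Fin k → ℝ) : enorm (v - w) ≤ enorm v + enorm w := by
  simpa only [enorm_eq_norm_toLp, WithLp.toLp_sub] using norm_sub_le _ _

lemma enorm_smul (c : ℝ) (v : Fin k → ℝ) : enorm (c • v) = |c| * enorm v := by
  rw [enorm_eq_norm_toLp, enorm_eq_norm_toLp, WithLp.toLp_smul, norm_smul, Real.norm_eq_abs]

lemma enorm_le_enorm_of_abs_le {v x : Fin k → ℝ} (h : ∀ j, |v j| ≤ |x j|) :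
    enorm v ≤ enorm x :=
  Real.sqrt_le_sqrt (Finset.sum_le_sum fun j _ => sq_le_sq.2 (h j))

lemma enorm_le_mul_of_abs_le {v x : Fin k → ℝ} {K : ℝ} (hK : 0 ≤ K)
    (h : ∀ j, |v j| ≤ K * |x j|) : enorm v ≤ K * enorm x := by
  calc enorm v ≤ enorm (K • x) := enorm_le_enorm_of_abs_le fun j => by
        rw [Pi.smul_apply, smul_eq_mul, abs_mul, abs_of_nonneg hK]; exact h j
    _ = K * enorm x := by rw [enorm_smul, abs_of_nonneg hK]

lemma enorm_mul_sub_mul_le {a a' b b' : Fin k → ℝ} {A B : ℝ} (hA : 0 ≤ A) (hB : 0 ≤ B)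
    (ha' : ∀ j, |a' j| ≤ A) (hb : ∀ j, |b j| ≤ B) :
    enorm (a * b - a' * b') ≤ A * enorm (b - b') + B * enorm (a - a') := by
  rw [show a * b - a' * b' = a' * (b - b') + b * (a - a') by ring]
  refine (enorm_add_le _ _).trans (add_le_add ?_ ?_)
  · exact enorm_le_mul_of_abs_le hA fun j => by
      rw [Pi.mul_apply, abs_mul]; exact mul_le_mul_of_nonneg_right (ha' j) (abs_nonneg _)
  · exact enorm_le_mul_of_abs_le hB fun j => by
      rw [Pi.mul_apply, abs_mul]; exact mul_le_mul_of_nonneg_right (hb j) (abs_nonneg _)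

lemma enorm_sigmoid_comp_sub_le (z z' : Fin k → ℝ) :
    enorm (sigmoid ∘ z - sigmoid ∘ z') ≤ 1 / 4 * enorm (z - z') :=
  enorm_le_mul_of_abs_le (by norm_num) fun j => abs_sigmoid_sub_le (z j) (z' j)

lemma enorm_tanh_comp_sub_le (z z' : Fin k → ℝ) :
    enorm (Real.tanh ∘ z - Real.tanh ∘ z') ≤ enorm (z - z') :=
  enorm_le_enorm_of_abs_le fun j => abs_tanh_sub_le (z j) (z' j)

open scoped Matrix.Norms.L2Operator in
lemma enorm_mulVec_le_spec (M : Matrix (Fin a) (Fin b) ℝ) (v : Fin b → ℝ) :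
    enorm (M *ᵥ v) ≤ spec M * enorm v := by
  have hop : ∀ x, enorm (M *ᵥ x) ≤ ‖M‖ * enorm x := fun x => by
    rw [enorm_eq_norm_toLp, enorm_eq_norm_toLp]
    exact M.l2_opNorm_mulVec (WithLp.toLp 2 x)
  have hbdd : BddAbove (Set.range fun x : {x : Fin b → ℝ // enorm x ≤ 1} => enorm (M *ᵥ x.1)) :=
    ⟨‖M‖, Set.forall_mem_range.2 fun x =>
      (hop x).trans (mul_le_of_le_one_right (norm_nonneg M) x.2)⟩
  rcases (enorm_nonneg v).eq_or_lt with hv | hv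
  · have h := hop v
    rwa [← hv, mul_zero] at h ⊢
  · have hunit : enorm ((enorm v)⁻¹ • v) ≤ 1 := by
      rw [enorm_smul, abs_inv, abs_of_pos hv, inv_mul_cancel₀ hv.ne']
    have h : enorm (M *ᵥ ((enorm v)⁻¹ • v)) ≤ spec M := le_ciSup hbdd ⟨_, hunit⟩
    rwa [mulVec_smul, enorm_smul, abs_inv, abs_of_pos hv, inv_mul_le_iff₀ hv, mul_comm] at h

end EuclideanNorm

lemma abs_le_of_vinf_le {k : ℕ} {v : Fin k → ℝ} {K : ℝ} (h : vinf v ≤ K) (j : Fin k) :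
    |v j| ≤ K :=
  (le_ciSup (Set.finite_range _).bddAbove j).trans h

lemma abs_mulVec_apply_le {a b : ℕ} {A : Matrix (Fin a) (Fin b) ℝ} {x : Fin b → ℝ} {s : ℝ}
    (hx : ∀ j, |x j| ≤ s) (i : Fin a) : |(A *ᵥ x) i| ≤ ∑ j, |s * A i j| := by
  simp only [mulVec, dotProduct]
  refine (Finset.abs_sum_le_sum_abs _ _).trans (Finset.sum_le_sum fun j _ => ?_)
  rw [abs_mul, abs_mul, mul_comm |s|]
  exact mul_le_mul_of_nonneg_left ((hx j).trans (le_abs_self s)) (abs_nonneg _)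

lemma abs_mulVec_apply_le_sum_abs {a b : ℕ} {A : Matrix (Fin a) (Fin b) ℝ} {x : Fin b → ℝ}
    (hx : ∀ j, |x j| ≤ 1) (i : Fin a) : |(A *ᵥ x) i| ≤ ∑ j, |A i j| := by
  simpa only [one_mul] using abs_mulVec_apply_le hx i

lemma abs_gateArg_le_rowNorm3 {umax : ℝ} (W : Matrix (Fin n) (Fin m) ℝ)
    (U : Matrix (Fin n) (Fin n) ℝ) (b : Fin n → ℝ) {u : Fin m → ℝ} {h : Fin n → ℝ}
    (hu : ∀ j, |u j| ≤ umax) (hh : ∀ j, |h j| ≤ 1) (i : Fin n) :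
    |(W *ᵥ u + U *ᵥ h + b) i| ≤ rowNorm3 umax W U b := by
  refine le_trans ?_ (le_ciSup (f := fun i => ∑ j, |umax * W i j| + ∑ j, |U i j| + |b i|)
    (Set.finite_range _).bddAbove i)
  simp only [Pi.add_apply]
  have := abs_add_three ((W *ᵥ u) i) ((U *ᵥ h) i) (b i)
  linarith [abs_mulVec_apply_le (A := W) hu i, abs_mulVec_apply_le_sum_abs (A := U) hh i]

/-- Substituting `r = W_y (h - ĥ) + e` regroups the argument into the five blocks of
`rowNorm5`. -/
lemma abs_obsGateArg_le_rowNorm5 {umax t : ℝ} (W : Matrix (Fin n) (Fin m) ℝ)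
    (U : Matrix (Fin n) (Fin n) ℝ) (b : Fin n → ℝ) (L : Matrix (Fin n) (Fin p) ℝ)
    (Wy : Matrix (Fin p) (Fin n) ℝ) {u : Fin m → ℝ} {h hh : Fin n → ℝ} {e r : Fin p → ℝ}
    (hu : ∀ j, |u j| ≤ umax) (hh1 : ∀ j, |h j| ≤ 1) (hhh1 : ∀ j, |hh j| ≤ 1)
    (he : ∀ j, |e j| ≤ t) (hr : r = Wy *ᵥ (h - hh) + e) (i : Fin n) :
    |(W *ᵥ u + U *ᵥ hh + b + L *ᵥ r) i| ≤ rowNorm5 umax W (U - L * Wy) b (L * Wy) t L := by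
  have hsplit : W *ᵥ u + U *ᵥ hh + b + L *ᵥ r
      = W *ᵥ u + (U - L * Wy) *ᵥ hh + b + (L * Wy) *ᵥ h + L *ᵥ e := by
    subst hr
    simp only [sub_mulVec, mulVec_add, mulVec_sub, ← mulVec_mulVec]
    abel
  rw [hsplit]
  refine le_trans ?_ (le_ciSup (f := fun i => ∑ j, |umax * W i j| + ∑ j, |(U - L * Wy) i j|
    + |b i| + ∑ j, |(L * Wy) i j| + ∑ j, |t * L i j|) (Set.finite_range _).bddAbove i)
  simp only [Pi.add_apply]
  have := abs_add_three ((W *ᵥ u) i) (((U - L * Wy) *ᵥ hh) i) (b i)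
  have := abs_add_three ((W *ᵥ u) i + ((U - L * Wy) *ᵥ hh) i + b i) (((L * Wy) *ᵥ h) i)
    ((L *ᵥ e) i)
  linarith [abs_mulVec_apply_le (A := W) hu i, abs_mulVec_apply_le_sum_abs (A := U - L * Wy) hhh1 i,
    abs_mulVec_apply_le_sum_abs (A := L * Wy) hh1 i, abs_mulVec_apply_le (A := L) he i]

lemma enorm_gateArg_sub_obsGateArg_le (W : Matrix (Fin n) (Fin m) ℝ)
    (U : Matrix (Fin n) (Fin n) ℝ) (b : Fin n → ℝ) (L : Matrix (Fin n) (Fin p) ℝ)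
    (Wy : Matrix (Fin p) (Fin n) ℝ) {u : Fin m → ℝ} {h hh : Fin n → ℝ} {e r : Fin p → ℝ}
    (hr : r = Wy *ᵥ (h - hh) + e) :
    enorm ((W *ᵥ u + U *ᵥ h + b) - (W *ᵥ u + U *ᵥ hh + b + L *ᵥ r)) ≤
      spec (U - L * Wy) * enorm (h - hh) + spec L * enorm e := by
  have hdiff : (W *ᵥ u + U *ᵥ h + b) - (W *ᵥ u + U *ᵥ hh + b + L *ᵥ r)
      = (U - L * Wy) *ᵥ (h - hh) - L *ᵥ e := by
    subst hr
    simp only [sub_mulVec, mulVec_add, mulVec_sub, ← mulVec_mulVec]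
    abel
  rw [hdiff]
  exact (enorm_sub_le _ _).trans
    (add_le_add (enorm_mulVec_le_spec _ _) (enorm_mulVec_le_spec _ _))

lemma abs_sub_sat_le {k : ℕ} {dmax : ℝ} {x : Fin k → ℝ} (hx : x ∈ setD k dmax)
    (v : Fin k → ℝ) (j : Fin k) : |x j - sat dmax v j| ≤ |x j - v j| := by
  have hxj := abs_le.1 (abs_le_of_vinf_le hx j)
  have hfix : min (max (x j) (-dmax)) dmax = x j := by
    rw [max_eq_left hxj.1, min_eq_left hxj.2]
  calc |x j - sat dmax v j|
      = |min (max (x j) (-dmax)) dmax - min (max (v j) (-dmax)) dmax| := by rw [hfix, sat]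
    _ ≤ max |max (x j) (-dmax) - max (v j) (-dmax)| |dmax - dmax| :=
        abs_min_sub_min_le_max _ _ _ _
    _ ≤ |x j - v j| := by
        rw [sub_self, abs_zero]
        exact max_le (abs_max_sub_max_le_abs _ _ _) (abs_nonneg _)

section CellBounds

variable {k : ℕ}

lemma enorm_cellUpdate_sub_le {zf zf' zi zi' zc zc' c c' : Fin k → ℝ} {F I C B : ℝ}
    (hF : 0 ≤ F) (hI : 0 ≤ I) (hC : 0 ≤ C) (hB : 0 ≤ B)
    (hf' : ∀ j, |sigmoid (zf' j)| ≤ F) (hi : ∀ j, |sigmoid (zi j)| ≤ I)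
    (hc' : ∀ j, |Real.tanh (zc' j)| ≤ C) (hc : ∀ j, |c j| ≤ B) :
    enorm ((sigmoid ∘ zf) * c + (sigmoid ∘ zi) * (Real.tanh ∘ zc)
        - ((sigmoid ∘ zf') * c' + (sigmoid ∘ zi') * (Real.tanh ∘ zc'))) ≤
      F * enorm (c - c') + B / 4 * enorm (zf - zf') + I * enorm (zc - zc')
        + C / 4 * enorm (zi - zi') := by
  have hforget := enorm_mul_sub_mul_le (a := sigmoid ∘ zf) (a' := sigmoid ∘ zf') (b := c)
    (b' := c') hF hB hf' hc
  have hinput := enorm_mul_sub_mul_le (a := Real.tanh ∘ zc) (a' := Real.tanh ∘ zc')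
    (b := sigmoid ∘ zi) (b' := sigmoid ∘ zi') hC hI hc' hi
  have hf := enorm_sigmoid_comp_sub_le zf zf'
  have hi := enorm_sigmoid_comp_sub_le zi zi'
  have hc := enorm_tanh_comp_sub_le zc zc'
  calc _ = enorm (((sigmoid ∘ zf) * c - (sigmoid ∘ zf') * c')
        + ((Real.tanh ∘ zc) * (sigmoid ∘ zi) - (Real.tanh ∘ zc') * (sigmoid ∘ zi'))) := by
        congr 1; ring
    _ ≤ _ := enorm_add_le _ _
    _ ≤ _ := by linear_combination hforget + hinput + B * hf + C * hi + I * hc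

lemma enorm_hiddenUpdate_sub_le {zo zo' zc zc' : Fin k → ℝ} {O X : ℝ} (hO : 0 ≤ O)
    (hX : 0 ≤ X) (ho' : ∀ j, |sigmoid (zo' j)| ≤ O) (hc : ∀ j, |Real.tanh (zc j)| ≤ X) :
    enorm ((sigmoid ∘ zo) * (Real.tanh ∘ zc) - (sigmoid ∘ zo') * (Real.tanh ∘ zc')) ≤
      O * enorm (zc - zc') + X / 4 * enorm (zo - zo') := by
  have := enorm_mul_sub_mul_le (a := sigmoid ∘ zo) (a' := sigmoid ∘ zo') (b := Real.tanh ∘ zc)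
    (b' := Real.tanh ∘ zc') hO hX ho' hc
  linear_combination this + O * enorm_tanh_comp_sub_le zc zc'
    + X * enorm_sigmoid_comp_sub_le zo zo'

end CellBounds

section Observer

variable {S : LSTM n m p} {G : Gains n p} {umax dmax : ℝ} {u : Fin m → ℝ}
  {c h ch hh : Fin n → ℝ} {d dh y : Fin p → ℝ}

lemma sub_yhat_eq (hy : y = S.Wy *ᵥ h + S.bY + d) :
    y - yhat S hh dh = S.Wy *ᵥ (h - hh) + (d - dh) := by
  subst hy
  simp only [yhat, mulVec_sub]
  abel

lemma sCb_nonneg (S : LSTM n m p) (umax : ℝ) : 0 ≤ sCb S umax :=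
  tanh_nonneg (Real.iSup_nonneg fun _ => by positivity)

lemma cellBound_nonneg (S : LSTM n m p) (umax : ℝ) :
    0 ≤ sIb S umax * sCb S umax / (1 - sFb S umax) :=
  div_nonneg (mul_nonneg (sigmoid_pos _).le (sCb_nonneg S umax))
    (sub_pos.2 (sigmoid_lt_one _)).le

lemma abs_sub_apply_le_of_mem_setD (hd : d ∈ setD p dmax) (hdh : dh ∈ setD p dmax) (j : Fin p) :
    |(d - dh) j| ≤ 2 * dmax :=
  (abs_sub _ _).trans (by linarith [abs_le_of_vinf_le hd j, abs_le_of_vinf_le hdh j])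

/-- `C` is forward invariant: `σ̄f c̄ + σ̄i σ̄c = c̄` for `c̄ = σ̄i σ̄c / (1 - σ̄f)`. -/
lemma abs_stepC_le (huU : u ∈ setU m umax) (hx : (c, h) ∈ setX S umax) (j : Fin n) :
    |stepC S u c h j| ≤ sIb S umax * sCb S umax / (1 - sFb S umax) := by
  have hu := abs_le_of_vinf_le huU
  have hh := abs_le_of_vinf_le hx.2
  have hF := abs_sigmoid_le_of_abs_le (abs_gateArg_le_rowNorm3 S.Wf S.Uf S.bf hu hh j)
  have hI := abs_sigmoid_le_of_abs_le (abs_gateArg_le_rowNorm3 S.Wi S.Ui S.bi hu hh j)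
  have hC := abs_tanh_le_of_abs_le (abs_gateArg_le_rowNorm3 S.Wc S.Uc S.bc hu hh j)
  have hc := abs_le_of_vinf_le hx.1 j
  have hFlt : 0 < 1 - sFb S umax := sub_pos.2 (sigmoid_lt_one _)
  have hfix : sFb S umax * (sIb S umax * sCb S umax / (1 - sFb S umax))
      + sIb S umax * sCb S umax = sIb S umax * sCb S umax / (1 - sFb S umax) := by
    field_simp
    ring
  rw [← hfix, stepC]
  refine (abs_add_le _ _).trans (add_le_add ?_ ?_) <;> rw [abs_mul]
  · exact mul_le_mul hF hc (abs_nonneg _) (sigmoid_pos _).le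
  · exact mul_le_mul hI hC (abs_nonneg _) (sigmoid_pos _).le

lemma enorm_stepC_sub_obsC_le (huU : u ∈ setU m umax) (hx : (c, h) ∈ setX S umax)
    (hhh : hh ∈ setH n) (hdD : d ∈ setD p dmax) (hdh : dh ∈ setD p dmax)
    (hy : y = S.Wy *ᵥ h + S.bY + d) :
    enorm (stepC S u c h - obsC S G u y ch hh dh) ≤
      sFh S G umax dmax * enorm (c - ch) + alphaH S G umax * enorm (h - hh)
        + betaH S G umax * enorm (d - dh) := by
  have hr := sub_yhat_eq (hh := hh) (dh := dh) hy
  have hu := abs_le_of_vinf_le huU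
  have hh1 := abs_le_of_vinf_le hx.2
  have hhh1 := abs_le_of_vinf_le hhh
  have he := abs_sub_apply_le_of_mem_setD hdD hdh
  have hcell : enorm (stepC S u c h - obsC S G u y ch hh dh) ≤ _ :=
    enorm_cellUpdate_sub_le (c := c) (c' := ch) (F := sFh S G umax dmax) (I := sIb S umax)
    (zf := S.Wf *ᵥ u + S.Uf *ᵥ h + S.bf)
    (zf' := S.Wf *ᵥ u + S.Uf *ᵥ hh + S.bf + G.Lf *ᵥ (y - yhat S hh dh))
    (zi := S.Wi *ᵥ u + S.Ui *ᵥ h + S.bi)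
    (zi' := S.Wi *ᵥ u + S.Ui *ᵥ hh + S.bi + G.Li *ᵥ (y - yhat S hh dh))
    (zc := S.Wc *ᵥ u + S.Uc *ᵥ h + S.bc) (zc' := S.Wc *ᵥ u + S.Uc *ᵥ hh + S.bc)
    (sigmoid_pos _).le (sigmoid_pos _).le (sCb_nonneg S umax) (cellBound_nonneg S umax)
    (fun j => abs_sigmoid_le_of_abs_le
      (abs_obsGateArg_le_rowNorm5 S.Wf S.Uf S.bf G.Lf S.Wy hu hh1 hhh1 he hr j))
    (fun j => abs_sigmoid_le_of_abs_le (abs_gateArg_le_rowNorm3 S.Wi S.Ui S.bi hu hh1 j))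
    (fun j => abs_tanh_le_of_abs_le (abs_gateArg_le_rowNorm3 S.Wc S.Uc S.bc hu hhh1 j))
    (abs_le_of_vinf_le hx.1)
  have hf := enorm_gateArg_sub_obsGateArg_le S.Wf S.Uf S.bf G.Lf S.Wy (u := u) hr
  have hi := enorm_gateArg_sub_obsGateArg_le S.Wi S.Ui S.bi G.Li S.Wy (u := u) hr
  have hc : enorm ((S.Wc *ᵥ u + S.Uc *ᵥ h + S.bc) - (S.Wc *ᵥ u + S.Uc *ᵥ hh + S.bc))
      ≤ spec S.Uc * enorm (h - hh) := by
    rw [show (S.Wc *ᵥ u + S.Uc *ᵥ h + S.bc) - (S.Wc *ᵥ u + S.Uc *ᵥ hh + S.bc)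
      = S.Uc *ᵥ (h - hh) by rw [mulVec_sub]; abel]
    exact enorm_mulVec_le_spec _ _
  have hB := cellBound_nonneg S umax
  have hC := sCb_nonneg S umax
  have hI : 0 ≤ sIb S umax := (sigmoid_pos _).le
  unfold alphaH betaH
  linear_combination hcell + (sIb S umax * sCb S umax / (1 - sFb S umax) / 4) * hf
    + sIb S umax * hc + sCb S umax / 4 * hi

lemma enorm_stepH_sub_obsH_le (huU : u ∈ setU m umax) (hx : (c, h) ∈ setX S umax)
    (hhh : hh ∈ setH n) (hdD : d ∈ setD p dmax) (hdh : dh ∈ setD p dmax)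
    (hy : y = S.Wy *ᵥ h + S.bY + d) :
    enorm (stepH S u c h - obsH S G u y ch hh dh) ≤
      sOh S G umax dmax * sFh S G umax dmax * enorm (c - ch) + gammaH S G umax dmax * enorm (h - hh)
        + (sOh S G umax dmax * betaH S G umax + 1 / 4 * sXb S umax * spec G.Lo)
          * enorm (d - dh) := by
  have hr := sub_yhat_eq (hh := hh) (dh := dh) hy
  have hhid : enorm (stepH S u c h - obsH S G u y ch hh dh) ≤ _ :=
    enorm_hiddenUpdate_sub_le (zo := S.Wo *ᵥ u + S.Uo *ᵥ h + S.bo)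
      (zo' := S.Wo *ᵥ u + S.Uo *ᵥ hh + S.bo + G.Lo *ᵥ (y - yhat S hh dh))
      (zc := stepC S u c h) (zc' := obsC S G u y ch hh dh)
      (O := sOh S G umax dmax) (X := sXb S umax) (sigmoid_pos _).le
      (tanh_nonneg (cellBound_nonneg S umax))
      (fun j => abs_sigmoid_le_of_abs_le (abs_obsGateArg_le_rowNorm5 S.Wo S.Uo S.bo G.Lo S.Wy
        (abs_le_of_vinf_le huU) (abs_le_of_vinf_le hx.2) (abs_le_of_vinf_le hhh)
        (abs_sub_apply_le_of_mem_setD hdD hdh) hr j))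
      (fun j => abs_tanh_le_of_abs_le (abs_stepC_le huU hx j))
  have ho := enorm_gateArg_sub_obsGateArg_le S.Wo S.Uo S.bo G.Lo S.Wy (u := u) hr
  have hc := enorm_stepC_sub_obsC_le (G := G) (ch := ch) huU hx hhh hdD hdh hy
  have hO : 0 ≤ sOh S G umax dmax := (sigmoid_pos _).le
  have hX : 0 ≤ sXb S umax := tanh_nonneg (cellBound_nonneg S umax)
  unfold gammaH
  linear_combination hhid + sOh S G umax dmax * hc + sXb S umax / 4 * ho

/-- The saturation cannot increase the error because `d⁺ = d + w` already lies in `D`. -/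
lemma enorm_sub_obsD_le {w : Fin p → ℝ} (hdw : d + w ∈ setD p dmax)
    (hy : y = S.Wy *ᵥ h + S.bY + d) :
    enorm ((d + w) - obsD S G dmax y hh dh) ≤
      spec (G.Ld * S.Wy) * enorm (h - hh) + spec (1 - G.Ld) * enorm (d - dh) + enorm w := by
  have hsat : enorm ((d + w) - obsD S G dmax y hh dh)
      ≤ enorm ((d + w) - (dh + G.Ld *ᵥ (y - yhat S hh dh))) :=
    enorm_le_enorm_of_abs_le fun j => abs_sub_sat_le hdw _ j
  have hlin : (d + w) - (dh + G.Ld *ᵥ (y - yhat S hh dh))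
      = (1 - G.Ld) *ᵥ (d - dh) - (G.Ld * S.Wy) *ᵥ (h - hh) + w := by
    rw [sub_yhat_eq hy]
    simp only [sub_mulVec, one_mulVec, mulVec_add, ← mulVec_mulVec]
    abel
  rw [hlin] at hsat
  linarith [enorm_add_le ((1 - G.Ld) *ᵥ (d - dh) - (G.Ld * S.Wy) *ᵥ (h - hh)) w,
    enorm_sub_le ((1 - G.Ld) *ᵥ (d - dh)) ((G.Ld * S.Wy) *ᵥ (h - hh)),
    enorm_mulVec_le_spec (1 - G.Ld) (d - dh), enorm_mulVec_le_spec (G.Ld * S.Wy) (h - hh)]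

end Observer

theorem statement8_general {n m p : ℕ} (S : LSTM n m p) (G : Gains n p) (umax dmax : ℝ)
    (u : Fin m → ℝ) (huU : u ∈ setU m umax)
    (c h : Fin n → ℝ) (hx : (c, h) ∈ setX S umax)
    (d : Fin p → ℝ) (hdD : d ∈ setD p dmax)
    (w : Fin p → ℝ) (hdw : d + w ∈ setD p dmax)
    (ch hh : Fin n → ℝ) (dh : Fin p → ℝ) (hchi : (ch, hh, dh) ∈ setIhat S G umax dmax)
    (y : Fin p → ℝ) (hy : y = S.Wy.mulVec h + S.bY + d) :
    ∀ i : Fin 3,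
      ![enorm (stepC S u c h - obsC S G u y ch hh dh),
        enorm (stepH S u c h - obsH S G u y ch hh dh),
        enorm ((d + w) - obsD S G dmax y hh dh)] i ≤
      (Ad S G umax dmax).mulVec ![enorm (c - ch), enorm (h - hh), enorm (d - dh)] i +
        ![(0 : ℝ), 0, 1] i * enorm w := by
  have row0 := enorm_stepC_sub_obsC_le (G := G) (ch := ch) huU hx hchi.2.1 hdD hchi.2.2 hy
  have row1 := enorm_stepH_sub_obsH_le (G := G) (ch := ch) huU hx hchi.2.1 hdD hchi.2.2 hy
  have row2 := enorm_sub_obsD_le (G := G) (hh := hh) (dh := dh) hdw hy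
  intro i
  fin_cases i <;>
    simp only [Ad, mulVec, dotProduct, Fin.sum_univ_three, Fin.zero_eta, Fin.mk_one,
      Fin.reduceFinMk, Fin.isValue, of_apply, cons_val_zero, cons_val_one, cons_val, cons_val',
      cons_val_fin_one, one_div, zero_mul, one_mul, add_zero, zero_add] <;>
    linarith

/-- one-step bound for the observer estimation error (eq. (24)). -/
theorem statement8 {n m p : ℕ} (S : LSTM n m p) (G : Gains n p) (umax dmax : ℝ)
    (hu : 0 < umax) (hd : 0 < dmax)
    (u : Fin m → ℝ) (huU : u ∈ setU m umax)
    (c h : Fin n → ℝ) (hx : (c, h) ∈ setX S umax)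
    (d : Fin p → ℝ) (hdD : d ∈ setD p dmax)
    (w : Fin p → ℝ) (hdw : d + w ∈ setD p dmax)
    (ch hh : Fin n → ℝ) (dh : Fin p → ℝ) (hchi : (ch, hh, dh) ∈ setIhat S G umax dmax)
    (y : Fin p → ℝ) (hy : y = S.Wy.mulVec h + S.bY + d) :
    ∀ i : Fin 3,
      ![enorm (stepC S u c h - obsC S G u y ch hh dh),
        enorm (stepH S u c h - obsH S G u y ch hh dh),
        enorm ((d + w) - obsD S G dmax y hh dh)] i ≤
      (Ad S G umax dmax).mulVec ![enorm (c - ch), enorm (h - hh), enorm (d - dh)] i +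
        ![(0 : ℝ), 0, 1] i * enorm w :=
  statement8_general S G umax dmax u huU c h hx d hdD w hdw ch hh dh hchi y hy

end LSTMmpc
end
end

section
/- Let A be an n×n real matrix with nonnegative entries and spectral radius ρ(A) < 1, let B ∈ ℝⁿ have nonnegative entries, let (e_k) be a sequence of vectors in ℝⁿ with nonnegative entries, and let (w_k) be a sequence of nonnegative reals with w_k → 0 as k → ∞. If e_{k+1} ≤ A e_k + B w_k componentwise for all k ≥ 0, then e_k → 0 as k → ∞. -/
/-!
Pick `ρ(A) < r < 1`. By Gelfand's formula some power satisfies `‖A ^ (K + 1)‖_∞ ≤ r ^ (K + 1)`,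
and then `x = ∑_{k ≤ K} r⁻ᵏ Aᵏ 𝟙` satisfies `x ≥ 𝟙` and `A x ≤ r x`, since `r x - A x` telescopes
to `r 𝟙 - r⁻ᴷ A ^ (K + 1) 𝟙 ≥ 0`. In the norm `v = maxᵢ |vᵢ| / xᵢ` the recursion becomes the
scalar inequality `v_{k+1} ≤ r v_k + ‖B‖ |w_k|`, which forces `v_k → 0`, hence `e_k → 0`.
-/

open Matrix Filter Set
open scoped ENNReal NNReal BigOperators

noncomputable section

open scoped Topology

theorem tendsto_zero_of_le_mul_add {r : ℝ} (hr0 : 0 ≤ r) (hr1 : r < 1) {v w : ℕ → ℝ}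
    (hv : ∀ k, 0 ≤ v k) (hrec : ∀ k, v (k + 1) ≤ r * v k + w k)
    (hw : Tendsto w atTop (𝓝 0)) : Tendsto v atTop (𝓝 0) := by
  refine tendsto_order.2 ⟨fun a ha => .of_forall fun k => ha.trans_le (hv k), fun a ha => ?_⟩
  obtain ⟨K, hK⟩ := eventually_atTop.1 <| hw.eventually_le_const (show 0 < (1 - r) * (a / 2) by
    have : 0 < 1 - r := by linarith
    positivity)
  have hbound : ∀ k ≥ K, v k ≤ a / 2 + r ^ (k - K) * v K := by
    refine Nat.le_induction (by simpa using (half_pos ha).le) fun k hk ih => ?_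
    rw [Nat.sub_add_comm hk, pow_succ']
    nlinarith [hrec k, hK k hk]
  have hdecay : Tendsto (fun k => r ^ (k - K) * v K) atTop (𝓝 0) := by
    simpa using ((tendsto_pow_atTop_nhds_zero_of_lt_one hr0 hr1).comp
      (tendsto_sub_atTop_nat K)).mul_const (v K)
  filter_upwards [hdecay.eventually_lt_const (half_pos ha), eventually_ge_atTop K] with k hk hKk
  linarith [hbound k hKk]

namespace Matrix

variable {ι : Type*} [Fintype ι]

theorem mulVec_nonneg_of_nonneg {M : Matrix ι ι ℝ} (hM : ∀ i j, 0 ≤ M i j) {v : ι → ℝ}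
    (hv : 0 ≤ v) : 0 ≤ M *ᵥ v := fun i => dotProduct_nonneg_of_nonneg (hM i) hv

theorem mulVec_le_mulVec_of_nonneg {M : Matrix ι ι ℝ} (hM : ∀ i j, 0 ≤ M i j) {u v : ι → ℝ}
    (huv : u ≤ v) : M *ᵥ u ≤ M *ᵥ v := fun i => dotProduct_le_dotProduct_of_nonneg_left huv (hM i)

theorem tendsto_zero_of_le_mulVec_add {A : Matrix ι ι ℝ} (hA : ∀ i j, 0 ≤ A i j) {r : ℝ}
    (hr0 : 0 ≤ r) (hr1 : r < 1) {x : ι → ℝ} (hx : 1 ≤ x) (hAx : A *ᵥ x ≤ r • x) (B : ι → ℝ)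
    {e : ℕ → ι → ℝ} (he : ∀ k i, 0 ≤ e k i) {w : ℕ → ℝ} (hw : Tendsto w atTop (𝓝 0))
    (hrec : ∀ k i, e (k + 1) i ≤ (A *ᵥ e k) i + B i * w k) :
    Tendsto e atTop (𝓝 0) := by
  have hxpos : ∀ i, 0 < x i := fun i => one_pos.trans_le (hx i)
  set v : ℕ → ℝ := fun k => ‖fun i => e k i / x i‖
  have he_le : ∀ k, e k ≤ v k • x := fun k i => by
    rw [Pi.smul_apply, smul_eq_mul, ← div_le_iff₀ (hxpos i)]
    exact (le_abs_self _).trans (norm_le_pi_norm (fun i => e k i / x i) i)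
  have hv_rec : ∀ k, v (k + 1) ≤ r * v k + ‖B‖ * |w k| := fun k => by
    refine (pi_norm_le_iff_of_nonneg (by positivity)).2 fun i => ?_
    rw [Real.norm_eq_abs, abs_of_nonneg (div_nonneg (he _ i) (hxpos i).le),
      div_le_iff₀ (hxpos i)]
    have hAe : (A *ᵥ e k) i ≤ v k * (r * x i) := by
      calc (A *ᵥ e k) i ≤ (A *ᵥ (v k • x)) i := mulVec_le_mulVec_of_nonneg hA (he_le k) i
        _ = v k * (A *ᵥ x) i := by rw [mulVec_smul, Pi.smul_apply, smul_eq_mul]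
        _ ≤ v k * (r * x i) := mul_le_mul_of_nonneg_left (hAx i) (norm_nonneg _)
    have hBw : B i * w k ≤ ‖B‖ * |w k| * x i := by
      calc B i * w k ≤ |B i| * |w k| := by rw [← abs_mul]; exact le_abs_self _
        _ ≤ ‖B‖ * |w k| := by gcongr; exact norm_le_pi_norm B i
        _ ≤ ‖B‖ * |w k| * x i := le_mul_of_one_le_right (by positivity) (hx i)
    linarith [hrec k i]
  have hv : Tendsto v atTop (𝓝 0) := tendsto_zero_of_le_mul_add hr0 hr1 (fun k => norm_nonneg _)
    hv_rec (by simpa using hw.abs.const_mul ‖B‖)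
  refine tendsto_pi_nhds.2 fun i => squeeze_zero (fun k => he k i) (fun k => he_le k i) ?_
  simpa using hv.mul_const (x i)

variable [DecidableEq ι]

attribute [local instance] Matrix.linftyOpNormedRing Matrix.linftyOpNormedAlgebra in
theorem eventually_sum_abs_pow_le_of_spectralRadius_lt (A : Matrix ι ι ℝ) {r : ℝ≥0}
    (h : spectralRadius ℂ (A.map ((↑) : ℝ → ℂ)) < r) :
    ∀ᶠ K in atTop, ∀ i, ∑ j, |(A ^ K) i j| ≤ r ^ K := by
  set A' := A.map ((↑) : ℝ → ℂ)
  filter_upwards [(spectrum.gelfand_formula A').eventually_lt_const h, eventually_gt_atTop 0]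
    with K hK hK0 i
  have hnorm : ‖A' ^ K‖₊ ≤ r ^ K := by
    rw [one_div, ENNReal.rpow_inv_lt_iff (by positivity), ENNReal.rpow_natCast,
      ← ENNReal.coe_pow, ENNReal.coe_lt_coe] at hK
    exact hK.le
  have hmap : A' ^ K = (A ^ K).map ((↑) : ℝ → ℂ) := (Complex.ofRealHom.mapMatrix.map_pow A K).symm
  have hrow : ∑ j, ‖(A' ^ K) i j‖₊ ≤ ‖A' ^ K‖₊ := by
    rw [linfty_opNNNorm_def]
    exact Finset.le_sup (f := fun i => ∑ j, ‖(A' ^ K) i j‖₊) (Finset.mem_univ i)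
  simpa [hmap, Complex.norm_real] using NNReal.coe_le_coe.2 (hrow.trans hnorm)

theorem exists_one_le_mulVec_le_smul {A : Matrix ι ι ℝ} (hA : ∀ i j, 0 ≤ A i j) {r : ℝ}
    (hr : 0 < r) {K : ℕ} (hK : ∀ i, ∑ j, (A ^ (K + 1)) i j ≤ r ^ (K + 1)) :
    ∃ x : ι → ℝ, 1 ≤ x ∧ A *ᵥ x ≤ r • x := by
  set u : ℕ → ι → ℝ := fun k => A ^ k *ᵥ 1
  have hu : ∀ k, 0 ≤ u k := fun k => mulVec_nonneg_of_nonneg (pow_apply_nonneg hA k) zero_le_one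
  set x := ∑ k ∈ Finset.range (K + 1), r⁻¹ ^ k • u k with hxdef
  have hx : x = 1 + ∑ k ∈ Finset.range K, r⁻¹ ^ (k + 1) • u (k + 1) := by
    rw [hxdef, Finset.sum_range_succ', add_comm]
    simp [u]
  have hAx : A *ᵥ x = ∑ k ∈ Finset.range (K + 1), r⁻¹ ^ k • u (k + 1) := by
    simp only [x, u, mulVec_sum, mulVec_smul, mulVec_mulVec, pow_succ']
  refine ⟨x, ?_, ?_⟩
  · rw [hx]
    exact le_add_of_nonneg_right <|
      Finset.sum_nonneg fun k _ => smul_nonneg (by positivity) (hu (k + 1))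
  · have htail : r⁻¹ ^ K • u (K + 1) ≤ r • 1 := fun i => by
      have : u (K + 1) i ≤ r ^ (K + 1) := by simpa [u, mulVec, dotProduct] using hK i
      simp only [Pi.smul_apply, smul_eq_mul, Pi.one_apply, mul_one]
      rw [inv_pow, inv_mul_le_iff₀ (by positivity), ← pow_succ]
      exact this
    have hshift : ∀ k, r • r⁻¹ ^ (k + 1) • u (k + 1) = r⁻¹ ^ k • u (k + 1) := fun k => by
      rw [smul_smul, pow_succ', mul_inv_cancel_left₀ hr.ne']
    rw [hAx, Finset.sum_range_succ, hx, smul_add, Finset.smul_sum]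
    simp only [hshift]
    rw [add_comm (r • 1)]
    exact add_le_add le_rfl htail

theorem exists_one_le_mulVec_le_smul_of_spectralRadius_lt_one {A : Matrix ι ι ℝ}
    (hA : ∀ i j, 0 ≤ A i j) (h : spectralRadius ℂ (A.map ((↑) : ℝ → ℂ)) < 1) :
    ∃ (r : ℝ) (x : ι → ℝ), 0 ≤ r ∧ r < 1 ∧ 1 ≤ x ∧ A *ᵥ x ≤ r • x := by
  obtain ⟨r, hρr, hr1⟩ := ENNReal.lt_iff_exists_nnreal_btwn.1 h
  have hr0 : (0 : ℝ) < r := ENNReal.coe_pos.1 (zero_le.trans_lt hρr)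
  obtain ⟨K, hK⟩ := ((tendsto_add_atTop_nat 1).eventually
    (eventually_sum_abs_pow_le_of_spectralRadius_lt A hρr)).exists
  obtain ⟨x, hx, hAx⟩ := exists_one_le_mulVec_le_smul hA hr0 (K := K) fun i =>
    (Finset.sum_le_sum fun j _ => le_abs_self _).trans (hK i)
  exact ⟨r, x, hr0.le, by exact_mod_cast ENNReal.coe_lt_one_iff.1 hr1, hx, hAx⟩

end Matrix

namespace LSTMmpc

theorem statement13_general {N : ℕ} (A : Matrix (Fin N) (Fin N) ℝ) (hA : ∀ i j, 0 ≤ A i j)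
    (hrho : specRad A < 1) (B : Fin N → ℝ)
    (e : ℕ → Fin N → ℝ) (he : ∀ k i, 0 ≤ e k i)
    (w : ℕ → ℝ) (hw0 : Tendsto w atTop (nhds 0))
    (hrec : ∀ k i, e (k + 1) i ≤ A.mulVec (e k) i + B i * w k) :
    Tendsto e atTop (nhds 0) := by
  obtain ⟨r, x, hr0, hr1, hx, hAx⟩ :=
    Matrix.exists_one_le_mulVec_le_smul_of_spectralRadius_lt_one hA hrho
  exact Matrix.tendsto_zero_of_le_mulVec_add hA hr0 hr1 hx hAx B he hw0 hrec

/-- a nonnegative vector sequence satisfying `e⁺ ≤ A e + B w`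
componentwise with `ρ(A) < 1` and `w → 0` converges to zero. -/
theorem statement13 {N : ℕ} (A : Matrix (Fin N) (Fin N) ℝ) (hA : ∀ i j, 0 ≤ A i j)
    (hrho : specRad A < 1) (B : Fin N → ℝ) (hB : ∀ i, 0 ≤ B i)
    (e : ℕ → Fin N → ℝ) (he : ∀ k i, 0 ≤ e k i)
    (w : ℕ → ℝ) (hw : ∀ k, 0 ≤ w k) (hw0 : Tendsto w atTop (nhds 0))
    (hrec : ∀ k i, e (k + 1) i ≤ A.mulVec (e k) i + B i * w k) :
    Tendsto e atTop (nhds 0) :=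
  statement13_general A hA hrho B e he w hw0 hrec

end LSTMmpc
end
end

section
/- Let p ≥ 1, let W_y ∈ ℝ^{p×n} be a matrix all of whose rows W_{y(j*)} are nonzero, let b_y, y_lb, y_ub, y⁰, d̂, a_N, b_N ∈ ℝᵖ with a_N ≥ 0 componentwise, let d_max > 0 with ‖d̂‖∞ ≤ d_max, let P_f ∈ ℝ^{2×2} be symmetric positive definite, let ê_o, ẽ_o be scalars with 0 ≤ ê_o ≤ ẽ_o, and let (c̄, h̄) ∈ ℝⁿ × ℝⁿ be a reference satisfying y⁰ = W_y h̄ + b_y + d̂. Define, for j = 1,…,p, α_j^{ub} = (√λ_min(P_f)/‖W_{y(j*)}‖)(y_{ub(j)} − y⁰_{(j)} − 2 d_max − a_{N(j)} ẽ_o − b_{N(j)}) and α_j^{lb} = (√λ_min(P_f)/‖W_{y(j*)}‖)(y⁰_{(j)} − y_{lb(j)} − 2 d_max − a_{N(j)} ẽ_o − b_{N(j)}), and α = min over j of min(α_j^{ub}, α_j^{lb}). Then every (c, h) ∈ ℝⁿ × ℝⁿ with ‖(‖c − c̄‖, ‖h − h̄‖)ᵀ‖_{P_f} ≤ α satisfies,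 componentwise, W_y h + b_y + d_max·1_p ≤ y_ub − a_N ê_o − b_N and W_y h + b_y − d_max·1_p ≥ y_lb + a_N ê_o + b_N. -/
open Matrix Filter Set
open scoped ENNReal NNReal BigOperators

noncomputable section

namespace LSTMmpc

variable {n m p : ℕ}

/-! Since `P_f ≥ λ_min(P_f) I`, the weighted norm dominates `√λ_min · ‖h − h̄‖`, so the bound
`α ≤ α_j` gives, by Cauchy–Schwarz, `|W_{y(j*)} (h − h̄)| ≤ ‖W_{y(j*)}‖ ‖h − h̄‖ ≤ m_j`, where
`m_j` is the margin in the definition of `α_j`. The slack `2 d_max` in `m_j` absorbs both the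
disturbance estimate `d̂` hidden in `y⁰` and the `± d_max` tightening, and `ê_o ≤ ẽ_o`
absorbs the observer error term. -/

theorem enorm_eq_sqrt_dotProduct {k : ℕ} (v : Fin k → ℝ) : enorm v = Real.sqrt (v ⬝ᵥ v) := by
  simp only [enorm, dotProduct, sq]

theorem enorm_pos_of_ne_zero {k : ℕ} {v : Fin k → ℝ} (hv : v ≠ 0) : 0 < enorm v := by
  obtain ⟨i, hi⟩ := Function.ne_iff.1 hv
  exact Real.sqrt_pos.2 <| Finset.sum_pos' (fun j _ => sq_nonneg (v j))
    ⟨i, Finset.mem_univ i, pow_pos (abs_pos.2 hi) 2 |>.trans_eq (sq_abs _)⟩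

theorem abs_le_enorm {k : ℕ} (v : Fin k → ℝ) (i : Fin k) : |v i| ≤ enorm v :=
  Real.abs_le_sqrt <| Finset.single_le_sum (fun j _ => sq_nonneg (v j)) (Finset.mem_univ i)

theorem abs_dotProduct_le_enorm_mul_enorm {k : ℕ} (a b : Fin k → ℝ) :
    |a ⬝ᵥ b| ≤ enorm a * enorm b := by
  rw [enorm, enorm, ← Real.sqrt_mul (Finset.sum_nonneg fun i _ => sq_nonneg (a i)),
    ← Real.sqrt_sq_eq_abs]
  exact Real.sqrt_le_sqrt (Finset.sum_mul_sq_le_sq_mul_sq Finset.univ a b)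

theorem abs_mulVec_apply_le_s16 {m k : ℕ} (M : Matrix (Fin m) (Fin k) ℝ) (v : Fin k → ℝ)
    (j : Fin m) : |(M *ᵥ v) j| ≤ enorm (M j) * enorm v :=
  abs_dotProduct_le_enorm_mul_enorm (M j) v

theorem abs_le_vinf {k : ℕ} (v : Fin k → ℝ) (i : Fin k) : |v i| ≤ vinf v :=
  le_ciSup (f := fun i => |v i|) (Set.finite_range _).bddAbove i

open scoped ComplexOrder in
theorem _root_.Matrix.IsHermitian.posSemidef_sub_smul_one_of_le_eigenvalues {𝕜 ι : Type*} [RCLike 𝕜] [Fintype ι]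
    [DecidableEq ι] {A : Matrix ι ι 𝕜} (hA : A.IsHermitian) {c : ℝ}
    (hc : ∀ i, c ≤ hA.eigenvalues i) : (A - c • (1 : Matrix ι ι 𝕜)).PosSemidef := by
  set U := hA.eigenvectorUnitary
  have hconj : A - c • (1 : Matrix ι ι 𝕜) =
      Unitary.conjStarAlgAut 𝕜 _ U (diagonal fun i => ((hA.eigenvalues i - c : ℝ) : 𝕜)) := by
    conv_lhs => rw [hA.spectral_theorem, RCLike.real_smul_eq_coe_smul (K := 𝕜)]
    rw [← map_one (Unitary.conjStarAlgAut 𝕜 _ U), ← map_smul, ← map_sub]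
    congr 1
    ext i j
    by_cases h : i = j <;> simp [h, Algebra.algebraMap_eq_smul_one, sub_smul]
  rw [hconj, Unitary.conjStarAlgAut_apply, Unitary.isUnit_coe.posSemidef_star_right_conjugate_iff,
    posSemidef_diagonal_iff]
  exact fun i => RCLike.ofReal_nonneg.2 (sub_nonneg.2 (hc i))

theorem lamMin_le_eigenvalues {k : ℕ} {P : Matrix (Fin k) (Fin k) ℝ} (hP : P.IsHermitian)
    (i : Fin k) : lamMin P hP ≤ hP.eigenvalues i :=
  ciInf_le (Set.finite_range _).bddBelow i

theorem lamMin_pos {k : ℕ} [NeZero k] {P : Matrix (Fin k) (Fin k) ℝ} (hP : P.PosDef) :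
    0 < lamMin P hP.1 := by
  obtain ⟨i, hi⟩ := exists_eq_ciInf_of_finite (f := hP.1.eigenvalues)
  rw [lamMin, ← hi]
  exact hP.eigenvalues_pos i

theorem lamMin_mul_dotProduct_self_le {k : ℕ} {P : Matrix (Fin k) (Fin k) ℝ}
    (hP : P.IsHermitian) (v : Fin k → ℝ) : lamMin P hP * (v ⬝ᵥ v) ≤ v ⬝ᵥ P *ᵥ v := by
  have h := (hP.posSemidef_sub_smul_one_of_le_eigenvalues (lamMin_le_eigenvalues hP)).dotProduct_mulVec_nonneg v
  rwa [star_trivial, sub_mulVec, smul_mulVec, one_mulVec, dotProduct_sub, dotProduct_smul,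
    smul_eq_mul, sub_nonneg] at h

theorem sqrt_lamMin_mul_enorm_le_wnorm {k : ℕ} {P : Matrix (Fin k) (Fin k) ℝ}
    (hP : P.IsHermitian) (v : Fin k → ℝ) :
    Real.sqrt (lamMin P hP) * enorm v ≤ wnorm P v := by
  have hvv : 0 ≤ v ⬝ᵥ v := Finset.sum_nonneg fun i _ => mul_self_nonneg (v i)
  rw [enorm_eq_sqrt_dotProduct, ← Real.sqrt_mul' _ hvv]
  exact Real.sqrt_le_sqrt (lamMin_mul_dotProduct_self_le hP v)

theorem mul_abs_le_of_wnorm_le {k : ℕ} [NeZero k] {P : Matrix (Fin k) (Fin k) ℝ}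
    (hP : P.PosDef) {v : Fin k → ℝ} (i : Fin k) {N X : ℝ} (hN : 0 < N)
    (h : wnorm P v ≤ Real.sqrt (lamMin P hP.1) / N * X) : N * |v i| ≤ X := by
  set L := Real.sqrt (lamMin P hP.1)
  have hL : 0 < L := Real.sqrt_pos.2 (lamMin_pos hP)
  have hvi : L * |v i| ≤ L / N * X :=
    (mul_le_mul_of_nonneg_left (abs_le_enorm v i) hL.le).trans
      ((sqrt_lamMin_mul_enorm_le_wnorm hP.1 v).trans h)
  refine le_of_mul_le_mul_left ?_ hL
  calc L * (N * |v i|) = N * (L * |v i|) := by ring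
    _ ≤ N * (L / N * X) := mul_le_mul_of_nonneg_left hvi hN.le
    _ = L * X := by field_simp

theorem statement16_general {n p : ℕ} (Wy : Matrix (Fin p) (Fin n) ℝ)
    (hWy : ∀ j, Wy j ≠ 0)
    (bY ylb yub y0 dh aN bN : Fin p → ℝ) (haN : ∀ j, 0 ≤ aN j)
    (dmax : ℝ) (hdh : vinf dh ≤ dmax)
    (Pf : Matrix (Fin 2) (Fin 2) ℝ) (hPf : Pf.PosDef)
    (eo et : ℝ) (hee : eo ≤ et)
    (cb hb : Fin n → ℝ) (href : y0 = Wy.mulVec hb + bY + dh) :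
    ∀ c h : Fin n → ℝ,
      wnorm Pf ![enorm (c - cb), enorm (h - hb)] ≤
        (⨅ j : Fin p, min
          ((Real.sqrt (lamMin Pf hPf.1) / enorm (Wy j)) *
            (yub j - y0 j - 2 * dmax - aN j * et - bN j))
          ((Real.sqrt (lamMin Pf hPf.1) / enorm (Wy j)) *
            (y0 j - ylb j - 2 * dmax - aN j * et - bN j))) →
      (∀ j, Wy.mulVec h j + bY j + dmax ≤ yub j - aN j * eo - bN j) ∧
      (∀ j, ylb j + aN j * eo + bN j ≤ Wy.mulVec h j + bY j - dmax) := by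
  intro c h hle
  have hdev (j : Fin p) : |Wy.mulVec h j - Wy.mulVec hb j| ≤ enorm (Wy j) * enorm (h - hb) := by
    rw [← Pi.sub_apply, ← mulVec_sub]
    exact abs_mulVec_apply_le_s16 Wy (h - hb) j
  have hmargin (j : Fin p) :
      enorm (Wy j) * enorm (h - hb) ≤ yub j - y0 j - 2 * dmax - aN j * et - bN j ∧
      enorm (Wy j) * enorm (h - hb) ≤ y0 j - ylb j - 2 * dmax - aN j * et - bN j := by
    have hj := hle.trans (ciInf_le (Set.finite_range _).bddBelow j)
    have hN := enorm_pos_of_ne_zero (hWy j)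
    have hv : |![enorm (c - cb), enorm (h - hb)] 1| = enorm (h - hb) := by
      simp [Real.sqrt_nonneg, enorm]
    exact ⟨hv ▸ mul_abs_le_of_wnorm_le hPf 1 hN (hj.trans (min_le_left _ _)),
      hv ▸ mul_abs_le_of_wnorm_le hPf 1 hN (hj.trans (min_le_right _ _))⟩
  have hdhj (j : Fin p) := abs_le.1 ((abs_le_vinf dh j).trans hdh)
  have hy0 (j : Fin p) : y0 j = Wy.mulVec hb j + bY j + dh j := by simp [href]
  have hobs (j : Fin p) : aN j * eo ≤ aN j * et := mul_le_mul_of_nonneg_left hee (haN j)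
  refine ⟨fun j => ?_, fun j => ?_⟩
  · linarith [(hmargin j).1, (abs_le.1 (hdev j)).2, hdhj j, hy0 j, hobs j]
  · linarith [(hmargin j).2, (abs_le.1 (hdev j)).1, hdhj j, hy0 j, hobs j]

/-- membership in the terminal level set implies the tightened
output constraints (Part 2a of the proof of Theorem 4). -/
theorem statement16 {n p : ℕ} (hp : 1 ≤ p) (Wy : Matrix (Fin p) (Fin n) ℝ)
    (hWy : ∀ j, Wy j ≠ 0)
    (bY ylb yub y0 dh aN bN : Fin p → ℝ) (haN : ∀ j, 0 ≤ aN j)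
    (dmax : ℝ) (hdmax : 0 < dmax) (hdh : vinf dh ≤ dmax)
    (Pf : Matrix (Fin 2) (Fin 2) ℝ) (hPf : Pf.PosDef)
    (eo et : ℝ) (heo : 0 ≤ eo) (hee : eo ≤ et)
    (cb hb : Fin n → ℝ) (href : y0 = Wy.mulVec hb + bY + dh) :
    ∀ c h : Fin n → ℝ,
      wnorm Pf ![enorm (c - cb), enorm (h - hb)] ≤
        (⨅ j : Fin p, min
          ((Real.sqrt (lamMin Pf hPf.1) / enorm (Wy j)) *
            (yub j - y0 j - 2 * dmax - aN j * et - bN j))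
          ((Real.sqrt (lamMin Pf hPf.1) / enorm (Wy j)) *
            (y0 j - ylb j - 2 * dmax - aN j * et - bN j))) →
      (∀ j, Wy.mulVec h j + bY j + dmax ≤ yub j - aN j * eo - bN j) ∧
      (∀ j, ylb j + aN j * eo + bN j ≤ Wy.mulVec h j + bY j - dmax) :=
  statement16_general Wy hWy bY ylb yub y0 dh aN bN haN dmax hdh Pf hPf eo et hee cb hb href

end LSTMmpc
end
end

section
/- Let W_y ∈ ℝ^{p×n}, b_y ∈ ℝᵖ, h, ĥ ∈ ℝⁿ, d, d̂ ∈ ℝᵖ with ‖d̂‖∞ ≤ d_max, let c_o ∈ ℝᵖ with c_o ≥ 0 componentwise, and let V, ê be scalars with 0 ≤ V ≤ ê. Suppose |W_y(h − ĥ) + (d − d̂)| ≤ c_o · V componentwise, and that the tightened constraints W_y ĥ + b_y + d_max·1_p ≤ y_ub − c_o·ê and W_y ĥ + b_y − d_max·1_p ≥ y_lb + c_o·ê hold componentwise. Then the true output y = W_y h + b_y + d satisfies y_lb ≤ y ≤ y_ub componentwise. -/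
open Matrix Filter Set
open scoped ENNReal NNReal BigOperators

noncomputable section

namespace LSTMmpc

variable {n m p : ℕ}

/-- the tightened constraints at the first prediction step imply
satisfaction of the true output constraints (Part 1 of the proof of Theorem 4). -/
theorem statement17 {n p : ℕ} (Wy : Matrix (Fin p) (Fin n) ℝ) (bY : Fin p → ℝ)
    (h hh : Fin n → ℝ) (d dh : Fin p → ℝ) (dmax : ℝ) (hdmax : 0 < dmax)
    (hdh : vinf dh ≤ dmax)
    (co : Fin p → ℝ) (hco : ∀ j, 0 ≤ co j)
    (V e : ℝ) (hV : 0 ≤ V) (hVe : V ≤ e)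
    (ylb yub : Fin p → ℝ)
    (herr : ∀ j, |(Wy.mulVec (h - hh) + (d - dh)) j| ≤ co j * V)
    (hub : ∀ j, Wy.mulVec hh j + bY j + dmax ≤ yub j - co j * e)
    (hlb : ∀ j, ylb j + co j * e ≤ Wy.mulVec hh j + bY j - dmax) :
    ∀ j, ylb j ≤ Wy.mulVec h j + bY j + d j ∧ Wy.mulVec h j + bY j + d j ≤ yub j := by
  intro j
  have hdhj : |dh j| ≤ dmax := by
    refine le_trans ?_ hdh
    exact le_ciSup (f := fun i => |dh i|) (Set.Finite.bddAbove (Set.finite_range _)) j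
  have herrj := herr j
  have hkey : (Wy.mulVec (h - hh) + (d - dh)) j = Wy.mulVec h j - Wy.mulVec hh j + (d j - dh j) := by
    simp [Matrix.mulVec_sub, Pi.add_apply, Pi.sub_apply]
  rw [hkey] at herrj
  have habs := abs_le.mp herrj
  have hcoV : co j * V ≤ co j * e := mul_le_mul_of_nonneg_left hVe (hco j)
  have h1 := hub j
  have h2 := hlb j
  have hdhj' := abs_le.mp hdhj
  constructor <;> nlinarith [habs.1, habs.2, hdhj'.1, hdhj'.2]

end LSTMmpc
end
end

section
/- Let a, b, c > 0. For every ε > 0 there exist δ > 0 and μ > 0 (depending only on a, b, c, ε) with the following property: for every sequence (x_k) in ℝⁿ, every x̄ ∈ ℝⁿ, every sequence (V_k) of nonnegative reals, and all sequences (β_k), (γ_k) of nonnegative reals such that, for all k ≥ 0, a‖x_k − x̄‖² ≤ V_k ≤ b‖x_k − x̄‖² + β_k and V_{k+1} − V_k ≤ −c‖x_k − x̄‖² + γ_k, if ‖x_0 − x̄‖ ≤ δ and γ_k ≤ μ and β_k + γ_k ≤ μ for all k ≥ 0, then ‖x_k − x̄‖ ≤ ε for all k ≥ 0. -/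
open Matrix Filter Set
open scoped ENNReal NNReal BigOperators

noncomputable section

namespace LSTMmpc

variable {n m p : ℕ}

/-- stability from a Lyapunov-like function with bounded
perturbations (Part 3b of the proof of Theorem 4). -/
theorem statement18 {N : ℕ} (a b c : ℝ) (ha : 0 < a) (hb : 0 < b) (hc : 0 < c) :
    ∀ ε > 0, ∃ δ > 0, ∃ μ > 0,
      ∀ (x : ℕ → Fin N → ℝ) (xb : Fin N → ℝ) (V β γ : ℕ → ℝ),
        (∀ k, 0 ≤ V k) → (∀ k, 0 ≤ β k) → (∀ k, 0 ≤ γ k) →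
        (∀ k, a * enorm (x k - xb) ^ 2 ≤ V k) →
        (∀ k, V k ≤ b * enorm (x k - xb) ^ 2 + β k) →
        (∀ k, V (k + 1) - V k ≤ -c * enorm (x k - xb) ^ 2 + γ k) →
        enorm (x 0 - xb) ≤ δ → (∀ k, γ k ≤ μ) → (∀ k, β k + γ k ≤ μ) →
        ∀ k, enorm (x k - xb) ≤ ε := by
  intro ε hε
  have hbc : (0:ℝ) < b / c + 1 := by positivity
  refine ⟨ε * Real.sqrt (a / (2 * b)), by positivity,
    (a * ε ^ 2 / 2) / (b / c + 1), by positivity, ?_⟩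
  intro x xb V β γ hV hβ hγ hlow hup hdec h0 hγμ hβγμ
  set μ := (a * ε ^ 2 / 2) / (b / c + 1) with hμdef
  have hμpos : 0 < μ := by positivity
  have hμle : μ ≤ a * ε ^ 2 / 2 := by
    rw [hμdef, div_le_iff₀ hbc]
    nlinarith [mul_nonneg (by positivity : (0:ℝ) ≤ a * ε ^ 2 / 2) (by positivity : (0:ℝ) ≤ b / c)]
  have henn : ∀ k : ℕ, 0 ≤ enorm (x k - xb) := fun k => Real.sqrt_nonneg _
  have key : ∀ k, V k ≤ a * ε ^ 2 := by
    intro k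
    induction k with
    | zero =>
      have h1 : b * enorm (x 0 - xb) ^ 2 ≤ b * (ε * Real.sqrt (a / (2 * b))) ^ 2 := by
        apply mul_le_mul_of_nonneg_left _ hb.le
        exact pow_le_pow_left₀ (henn 0) h0 2
      have hsq : Real.sqrt (a / (2 * b)) ^ 2 = a / (2 * b) := by
        rw [sq]
        exact Real.mul_self_sqrt (by positivity)
      have h2 : b * (ε * Real.sqrt (a / (2 * b))) ^ 2 = a * ε ^ 2 / 2 := by
        rw [mul_pow, hsq]; field_simp
      have hβ0 : β 0 ≤ μ := by have := hβγμ 0; have := hγ 0; linarith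
      have := hup 0
      nlinarith [hμle]
    | succ k ih =>
      have hd := hdec k
      have he2 : (0:ℝ) ≤ enorm (x k - xb) ^ 2 := sq_nonneg _
      by_cases hcase : γ k ≤ c * enorm (x k - xb) ^ 2
      · nlinarith
      · push_neg at hcase
        have hce : c * enorm (x k - xb) ^ 2 ≤ μ := le_trans hcase.le (hγμ k)
        have hbe : b * enorm (x k - xb) ^ 2 ≤ (b / c) * μ := by
          rw [div_mul_eq_mul_div, le_div_iff₀ hc]
          nlinarith
        have := hup k
        have hbg := hβγμ k
        have : V (k + 1) ≤ (b / c) * μ + μ := by nlinarith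
        have hfin : (b / c) * μ + μ = a * ε ^ 2 / 2 := by
          rw [hμdef]; field_simp
        nlinarith [sq_nonneg ε]
  intro k
  have h1 := hlow k
  have h2 := key k
  have he : enorm (x k - xb) ^ 2 ≤ ε ^ 2 := by nlinarith
  nlinarith [henn k, hε]

end LSTMmpc
end
end

section
/- Let a, b, c > 0, let (x_k) be a sequence in ℝⁿ, x̄ ∈ ℝⁿ, (V_k) a sequence of nonnegative reals, and (β_k), (γ_k) sequences of nonnegative reals with β_k → 0 and γ_k → 0 as k → ∞. Suppose that for all k ≥ 0, a‖x_k − x̄‖² ≤ V_k ≤ b‖x_k − x̄‖² + β_k and V_{k+1} − V_k ≤ −c‖x_k − x̄‖² + γ_k. Then V_k → 0 and x_k → x̄ as k → ∞. -/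
open Matrix Filter Set
open scoped ENNReal NNReal BigOperators

noncomputable section

namespace LSTMmpc

variable {n m p : ℕ}

/-! Inserting the upper bound `‖x_k - x̄‖² ≥ (V_k - β_k) / b` into the decrease condition gives
`V_{k+1} ≤ (1 - c/b) V_k + (c/b β_k + γ_k)`: a contraction driven by a vanishing input, so
`V_k → 0`, and the lower bound `a ‖x_k - x̄‖² ≤ V_k` then forces `x_k → x̄`. -/

theorem sub_le_pow_mul_sub_of_le_mul_add {u : ℕ → ℝ} {r C : ℝ} (hr : 0 ≤ r)
    (hstep : ∀ n, u (n + 1) ≤ r * u n + (1 - r) * C) (n : ℕ) :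
    u n - C ≤ r ^ n * (u 0 - C) := by
  induction n with
  | zero => simp
  | succ n ih =>
    calc u (n + 1) - C ≤ r * (u n - C) := by linarith [hstep n]
      _ ≤ r * (r ^ n * (u 0 - C)) := by gcongr
      _ = r ^ (n + 1) * (u 0 - C) := by ring

/- Past the index `K` where `δ ≤ (1 - r) ε / 2`, the gap `u - ε / 2` contracts by the
factor `r = max ρ 0` at each step. -/
theorem tendsto_zero_of_le_mul_add {u δ : ℕ → ℝ} {ρ : ℝ} (hρ : ρ < 1) (hu : ∀ k, 0 ≤ u k)
    (hδ : Tendsto δ atTop (nhds 0)) (hstep : ∀ k, u (k + 1) ≤ ρ * u k + δ k) :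
    Tendsto u atTop (nhds 0) := by
  set r := max ρ 0
  have hr0 : 0 ≤ r := le_max_right _ _
  have hr1 : r < 1 := max_lt hρ one_pos
  refine tendsto_order.2 ⟨fun a ha => Eventually.of_forall fun k => ha.trans_le (hu k),
    fun ε hε => ?_⟩
  obtain ⟨K, hK⟩ := eventually_atTop.1
    (hδ.eventually (ge_mem_nhds (show 0 < (1 - r) * (ε / 2) by nlinarith)))
  set w := fun n => u (n + K)
  have hw : ∀ n, w n - ε / 2 ≤ r ^ n * (w 0 - ε / 2) := by
    refine sub_le_pow_mul_sub_of_le_mul_add hr0 fun n => ?_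
    calc w (n + 1) = u (n + K + 1) := by rw [add_right_comm]
      _ ≤ ρ * u (n + K) + δ (n + K) := hstep _
      _ ≤ r * w n + (1 - r) * (ε / 2) := by
        gcongr
        · exact hu _
        · exact le_max_left _ _
        · exact hK _ (Nat.le_add_left K n)
  have hpow : Tendsto (fun n => r ^ n * (w 0 - ε / 2)) atTop (nhds 0) := by
    simpa using (tendsto_pow_atTop_nhds_zero_of_lt_one hr0 hr1).mul_const (w 0 - ε / 2)
  rw [← map_add_atTop_eq_nat K, eventually_map]
  filter_upwards [hpow.eventually (gt_mem_nhds (half_pos hε))] with n hn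
  linarith [hw n]

theorem norm_le_enorm {k : ℕ} (v : Fin k → ℝ) : ‖v‖ ≤ enorm v :=
  (pi_norm_le_iff_of_nonneg (Real.sqrt_nonneg _)).2 fun i =>
    Real.abs_le_sqrt (Finset.single_le_sum (fun j _ => sq_nonneg (v j)) (Finset.mem_univ i))

theorem statement19_general {N : ℕ} (a b c : ℝ) (ha : 0 < a) (hb : 0 < b) (hc : 0 < c)
    (x : ℕ → Fin N → ℝ) (xb : Fin N → ℝ) (V β γ : ℕ → ℝ)
    (hV : ∀ k, 0 ≤ V k)
    (hβ0 : Tendsto β atTop (nhds 0)) (hγ0 : Tendsto γ atTop (nhds 0))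
    (hlow : ∀ k, a * enorm (x k - xb) ^ 2 ≤ V k)
    (hupp : ∀ k, V k ≤ b * enorm (x k - xb) ^ 2 + β k)
    (hdec : ∀ k, V (k + 1) - V k ≤ -c * enorm (x k - xb) ^ 2 + γ k) :
    Tendsto V atTop (nhds 0) ∧ Tendsto x atTop (nhds xb) := by
  have hstep : ∀ k, V (k + 1) ≤ (1 - c / b) * V k + (c / b * β k + γ k) := fun k => by
    have hlow' : (V k - β k) / b ≤ enorm (x k - xb) ^ 2 := by
      rw [div_le_iff₀ hb]; linarith [hupp k]
    calc V (k + 1) ≤ V k - c * enorm (x k - xb) ^ 2 + γ k := by linarith [hdec k]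
      _ ≤ V k - c * ((V k - β k) / b) + γ k := by gcongr
      _ = (1 - c / b) * V k + (c / b * β k + γ k) := by field_simp; ring
  have hδ : Tendsto (fun k => c / b * β k + γ k) atTop (nhds 0) := by
    simpa using (hβ0.const_mul (c / b)).add hγ0
  have hV0 := tendsto_zero_of_le_mul_add (by linarith [div_pos hc hb]) hV hδ hstep
  have he : Tendsto (fun k => enorm (x k - xb)) atTop (nhds 0) := by
    have he2 : Tendsto (fun k => enorm (x k - xb) ^ 2) atTop (nhds 0) :=
      squeeze_zero (fun _ => sq_nonneg _) (fun k => (le_div_iff₀' ha).2 (hlow k))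
        (by simpa using hV0.div_const a)
    rw [← Real.sqrt_zero]
    exact he2.sqrt.congr fun k => Real.sqrt_sq (Real.sqrt_nonneg _)
  exact ⟨hV0, tendsto_iff_norm_sub_tendsto_zero.2
    (squeeze_zero (fun _ => norm_nonneg _) (fun _ => norm_le_enorm _) he)⟩

/-- convergence from a Lyapunov-like function with vanishing
perturbations (Part 3c of the proof of Theorem 4). -/
theorem statement19 {N : ℕ} (a b c : ℝ) (ha : 0 < a) (hb : 0 < b) (hc : 0 < c)
    (x : ℕ → Fin N → ℝ) (xb : Fin N → ℝ) (V β γ : ℕ → ℝ)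
    (hV : ∀ k, 0 ≤ V k) (hβ : ∀ k, 0 ≤ β k) (hγ : ∀ k, 0 ≤ γ k)
    (hβ0 : Tendsto β atTop (nhds 0)) (hγ0 : Tendsto γ atTop (nhds 0))
    (hlow : ∀ k, a * enorm (x k - xb) ^ 2 ≤ V k)
    (hupp : ∀ k, V k ≤ b * enorm (x k - xb) ^ 2 + β k)
    (hdec : ∀ k, V (k + 1) - V k ≤ -c * enorm (x k - xb) ^ 2 + γ k) :
    Tendsto V atTop (nhds 0) ∧ Tendsto x atTop (nhds xb) :=
  statement19_general a b c ha hb hc x xb V β γ hV hβ0 hγ0 hlow hupp hdec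

end LSTMmpc
end
end
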